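/- Ziegler's restriction theorem, part (i): Let A be a central arrangement in K^ℓ, fix H_1 ∈ A and choose coordinates so that α_{H_1} = x_1. If δ ∈ D_1(A) = {θ ∈ D(A) : θ(x_1) = 0}, then the restricted derivation δ|_{H_1} (obtained by setting x_1 = 0 in all coefficients of δ, viewed as a derivation of K[x_2,…,x_ℓ]) belongs to D(A^{H_1}, m^{H_1}), the logarithmic derivation module of the Ziegler multirestriction. -/

import Mathlib

open MvPolynomial

/-- The linear form `α = Σ_j a_j x_j` with coefficient vector `a`. -/
noncomputable def linForm {K : Type} [Field K] {ℓ : ℕ} (a : Fin ℓ → K) :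
    MvPolynomial (Fin ℓ) K :=
  ∑ j, C (a j) * X j

/-- Application `θ(α) = Σ_j a_j f_j` of a derivation `θ = Σ f_j ∂_{x_j}` to the linear
form with coefficient vector `a`, as a linear map in `θ`. -/
noncomputable def appL {K : Type} [Field K] {ℓ : ℕ} (a : Fin ℓ → K) :
    (Fin ℓ → MvPolynomial (Fin ℓ) K) →ₗ[MvPolynomial (Fin ℓ) K] MvPolynomial (Fin ℓ) K :=
  ∑ j, (C (a j) : MvPolynomial (Fin ℓ) K) • (LinearMap.proj j :
    (Fin ℓ → MvPolynomial (Fin ℓ) K) →ₗ[MvPolynomial (Fin ℓ) K] MvPolynomial (Fin ℓ) K)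

/-- The logarithmic derivation module `D(A,m)` of the multiarrangement with defining
forms `c i` and multiplicities `m i`. -/
noncomputable def Dlog {K : Type} [Field K] {ℓ : ℕ} {η : Type} (c : η → Fin ℓ → K)
    (m : η → ℕ) :
    Submodule (MvPolynomial (Fin ℓ) K) (Fin ℓ → MvPolynomial (Fin ℓ) K) where
  carrier := {θ | ∀ i, linForm (c i) ^ m i ∣ appL (c i) θ}
  add_mem' := fun ha hb i => by rw [map_add]; exact dvd_add (ha i) (hb i)
  zero_mem' := fun i => by rw [map_zero]; exact dvd_zero _
  smul_mem' := fun s θ h i => by rw [map_smul, smul_eq_mul]; exact (h i).mul_left s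


/-- The coefficient vector of the restriction of the linear form `c i` to the
hyperplane `{x_0 = 0}` (in the coordinates `x_1, …, x_ℓ`). -/
def cbar {K : Type} [Field K] {ℓ : ℕ} {η : Type} (c : η → Fin (ℓ + 1) → K) (i : η) :
    Fin ℓ → K :=
  fun j => c i j.succ

/-- The Ziegler multiplicity `m^{H₁}` of the restricted hyperplane `H_i ∩ H₁`
(`H₁` indexed by `i₀`):  the number of hyperplanes of `A` containing `H_i ∩ H₁`,
minus one. -/
noncomputable def zmult {K : Type} [Field K] {ℓ : ℕ} {η : Type} [Fintype η]
    (c : η → Fin (ℓ + 1) → K) (i₀ i : η) : ℕ := by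
  classical exact
    (Finset.univ.filter fun i' => i' ≠ i₀ ∧ ∃ t : K, cbar c i' = t • cbar c i).card

/-- The logarithmic derivation module `D(A^{H₁}, m^{H₁})` of the Ziegler
multirestriction of `A` to the hyperplane `H₁ = {x_0 = 0}` (indexed by `i₀`). -/
noncomputable def DlogZ {K : Type} [Field K] {ℓ : ℕ} {η : Type} [Fintype η]
    (c : η → Fin (ℓ + 1) → K) (i₀ : η) :
    Submodule (MvPolynomial (Fin ℓ) K) (Fin ℓ → MvPolynomial (Fin ℓ) K) := by
  classical exact Dlog (cbar c) (fun i => if i = i₀ then 0 else zmult c i₀ i)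

/-- Restriction of polynomials to the hyperplane `{x_0 = 0}`: substitute `x_0 = 0`
and rename `x_{j+1}` to `x_j`. -/
noncomputable def restPoly {K : Type} [Field K] {ℓ : ℕ} :
    MvPolynomial (Fin (ℓ + 1)) K →ₐ[K] MvPolynomial (Fin ℓ) K :=
  MvPolynomial.aeval (Fin.cases 0 MvPolynomial.X)

/-- The restriction `ρ(θ) = θ|_{x_0 = 0}` of a derivation `θ` with `θ(x_0) = 0` to the
hyperplane `{x_0 = 0}`. -/
noncomputable def restDer {K : Type} [Field K] {ℓ : ℕ}
    (θ : Fin (ℓ + 1) → MvPolynomial (Fin (ℓ + 1)) K) :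
    Fin ℓ → MvPolynomial (Fin ℓ) K :=
  fun j => restPoly (θ j.succ)

section Aux

variable {K : Type} [Field K] {ℓ : ℕ}

lemma appL_apply (a : Fin ℓ → K) (θ : Fin ℓ → MvPolynomial (Fin ℓ) K) :
    appL a θ = ∑ j, C (a j) * θ j := by
  simp [appL, LinearMap.sum_apply, smul_eq_mul]

lemma eval_linForm (x : Fin ℓ → K) (a : Fin ℓ → K) :
    eval x (linForm a) = ∑ j, a j * x j := by
  simp [linForm]

lemma linForm_smul (t : K) (a : Fin ℓ → K) : linForm (t • a) = C t * linForm a := by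
  simp [linForm, Finset.mul_sum, Pi.smul_apply, smul_eq_mul, C_mul, mul_assoc]

lemma mem_Dlog {η : Type} (c : η → Fin ℓ → K) (m : η → ℕ)
    (θ : Fin ℓ → MvPolynomial (Fin ℓ) K) :
    θ ∈ Dlog c m ↔ ∀ i, linForm (c i) ^ m i ∣ appL (c i) θ := Iff.rfl

lemma aeval_ite_linForm (a : Fin ℓ → K) (j : Fin ℓ) (w : MvPolynomial (Fin ℓ) K) :
    aeval (fun k => if k = j then w else X k) (linForm a)
      = linForm a + C (a j) * (w - X j) := by
  classical
  rw [linForm, map_sum]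
  have h : ∀ k : Fin ℓ, (aeval (fun k => if k = j then w else X k)) (C (a k) * X k)
      = C (a k) * X k + (if k = j then C (a k) * (w - X k) else 0) := by
    intro k
    simp only [map_mul, aeval_C, aeval_X, algebraMap_eq]
    split <;> ring
  rw [Finset.sum_congr rfl fun k _ => h k, Finset.sum_add_distrib,
    Finset.sum_ite_eq' Finset.univ j, if_pos (Finset.mem_univ j)]

/-- The linear change of coordinates sending `X j` to the linear form `linForm a`. -/
noncomputable def linAut (a : Fin ℓ → K) (j : Fin ℓ) (hj : a j ≠ 0) :
    MvPolynomial (Fin ℓ) K ≃ₐ[K] MvPolynomial (Fin ℓ) K := by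
  classical
  refine AlgEquiv.ofAlgHom
    (aeval fun k => if k = j then linForm a else X k)
    (aeval fun k => if k = j then
        C (a j)⁻¹ * (X j - (linForm a - C (a j) * X j)) else X k) ?_ ?_
  · apply MvPolynomial.algHom_ext
    intro k
    by_cases hk : k = j
    · subst hk
      have hC : (C (a k) : MvPolynomial (Fin ℓ) K) * C (a k)⁻¹ = 1 := by
        rw [← C_mul, mul_inv_cancel₀ hj, C_1]
      simp only [AlgHom.coe_comp, Function.comp_apply, AlgHom.coe_id, id_eq, aeval_X,
        if_pos rfl, ite_true, map_mul, map_sub, aeval_C, algebraMap_eq, aeval_ite_linForm]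
      linear_combination (X k : MvPolynomial (Fin ℓ) K) * hC
    · simp [AlgHom.coe_comp, Function.comp_apply, aeval_X, hk]
  · apply MvPolynomial.algHom_ext
    intro k
    by_cases hk : k = j
    · subst hk
      have hC : (C (a k) : MvPolynomial (Fin ℓ) K) * C (a k)⁻¹ = 1 := by
        rw [← C_mul, mul_inv_cancel₀ hj, C_1]
      simp only [AlgHom.coe_comp, Function.comp_apply, AlgHom.coe_id, id_eq, aeval_X,
        if_pos rfl, ite_true, map_mul, map_sub, aeval_C, algebraMap_eq, aeval_ite_linForm]
      linear_combination (X k - (linForm a - C (a k) * X k)) * hC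
    · simp [AlgHom.coe_comp, Function.comp_apply, aeval_X, hk]

lemma linAut_X (a : Fin ℓ → K) (j : Fin ℓ) (hj : a j ≠ 0) :
    linAut a j hj (X j) = linForm a := by
  classical
  simp [linAut, aeval_X]

lemma prime_X_mv (j : Fin (ℓ + 1)) : Prime (X j : MvPolynomial (Fin (ℓ + 1)) K) := by
  have h0 : Prime (X (0 : Fin (ℓ + 1)) : MvPolynomial (Fin (ℓ + 1)) K) := by
    rw [← MulEquiv.prime_iff (finSuccEquiv K ℓ).toRingEquiv.toMulEquiv]
    have : (finSuccEquiv K ℓ).toRingEquiv.toMulEquiv (X 0)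
        = (Polynomial.X : Polynomial (MvPolynomial (Fin ℓ) K)) := finSuccEquiv_X_zero
    rw [this]
    exact Polynomial.prime_X
  have he := (MulEquiv.prime_iff (renameEquiv K (Equiv.swap (0 : Fin (ℓ + 1)) j)).toRingEquiv.toMulEquiv
    (p := (X 0 : MvPolynomial (Fin (ℓ + 1)) K))).mpr h0
  simpa [Equiv.swap_apply_left] using he

lemma prime_linForm (a : Fin (ℓ + 1) → K) (ha : a ≠ 0) : Prime (linForm a) := by
  obtain ⟨j, hj⟩ : ∃ j, a j ≠ 0 := by
    by_contra h; push_neg at h; exact ha (funext h)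
  have hp := (MulEquiv.prime_iff (linAut a j hj).toRingEquiv.toMulEquiv
    (p := (X j : MvPolynomial (Fin (ℓ + 1)) K))).mpr (prime_X_mv j)
  rwa [show (linAut a j hj).toRingEquiv.toMulEquiv (X j) = linForm a from linAut_X a j hj] at hp

/-- If the kernel of the functional `a` is contained in that of `b`, then `b ∝ a`. -/
lemma hyperplane_incl (a b : Fin ℓ → K) (j₀ : Fin ℓ) (hj : a j₀ ≠ 0)
    (h : ∀ x : Fin ℓ → K, (∑ j, a j * x j) = 0 → (∑ j, b j * x j) = 0) :
    ∃ t : K, b = t • a := by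
  classical
  refine ⟨b j₀ / a j₀, funext fun k => ?_⟩
  have hx : (∑ j, a j * (a j₀ * (if j = k then 1 else 0)
      - a k * (if j = j₀ then 1 else 0))) = 0 := by
    simp [mul_sub, Finset.sum_sub_distrib, mul_ite, Finset.sum_ite_eq']
    ring
  have hb := h _ hx
  simp [mul_sub, Finset.sum_sub_distrib, mul_ite, Finset.sum_ite_eq'] at hb
  show b k = b j₀ / a j₀ * a k
  field_simp
  linear_combination hb

lemma prod_primes_dvd' {R : Type*} [CommMonoidWithZero R] [IsCancelMulZero R] {η : Type*} [DecidableEq η]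
    (S : Finset η) (p : η → R) (g : R) (hp : ∀ i ∈ S, Prime (p i))
    (hdvd : ∀ i ∈ S, p i ∣ g) (hnd : ∀ i ∈ S, ∀ j ∈ S, i ≠ j → ¬ p i ∣ p j) :
    (∏ i ∈ S, p i) ∣ g := by
  induction S using Finset.induction_on generalizing g with
  | empty => simp
  | @insert a s ha ih =>
    obtain ⟨h, rfl⟩ := hdvd a (Finset.mem_insert_self a s)
    rw [Finset.prod_insert ha]
    have h1 : ∀ i ∈ s, Prime (p i) := fun i hi => hp i (Finset.mem_insert_of_mem hi)
    have h2 : ∀ i ∈ s, p i ∣ h := by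
      intro i hi
      have hprime := hp i (Finset.mem_insert_of_mem hi)
      have hd := hdvd i (Finset.mem_insert_of_mem hi)
      rcases hprime.2.2 _ _ hd with hx | hx
      · exact absurd hx (hnd i (Finset.mem_insert_of_mem hi) a (Finset.mem_insert_self a s)
          (fun e => ha (e ▸ hi)))
      · exact hx
    have h3 : ∀ i ∈ s, ∀ j ∈ s, i ≠ j → ¬ p i ∣ p j := fun i hi j hj =>
      hnd i (Finset.mem_insert_of_mem hi) j (Finset.mem_insert_of_mem hj)
    exact mul_dvd_mul_left (p a) (ih h h1 h2 h3)

lemma restPoly_linForm (a : Fin (ℓ + 1) → K) :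
    restPoly (linForm a) = linForm (fun j : Fin ℓ => a j.succ) := by
  simp only [linForm, map_sum, map_mul, restPoly, aeval_C, aeval_X, algebraMap_eq]
  rw [Fin.sum_univ_succ]
  simp

end Aux

/-- **Ziegler's restriction theorem, part (i).**  Let `A` be a central arrangement in
`K^{ℓ+1}` and `H₁ ∈ A` (indexed by `i₀`), in coordinates such that `α_{H₁} = x_0`.
If `δ ∈ D₁(A) = {θ ∈ D(A) : θ(α_{H₁}) = 0}`, then the restricted derivation
`δ|_{x_0=0}` belongs to `D(A^{H₁}, m^{H₁})`, the logarithmic derivation module of the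
Ziegler multirestriction. -/
theorem ziegler_restriction_mem {K : Type} [Field K] [CharZero K] {ℓ : ℕ} {η : Type}
    [Fintype η]
    (c : η → Fin (ℓ + 1) → K)
    (hne : ∀ i, c i ≠ 0)
    (hdist : ∀ i i', i ≠ i' → ∀ t : K, c i ≠ t • c i')
    (i₀ : η)
    (hc₀ : c i₀ = fun j => if j = 0 then 1 else 0)
    (δ : Fin (ℓ + 1) → MvPolynomial (Fin (ℓ + 1)) K)
    (hδ : δ ∈ Dlog c fun _ => 1)
    (hδ1 : appL (c i₀) δ = 0) :
    restDer δ ∈ DlogZ c i₀ := by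
  classical
  have hδ0 : δ 0 = 0 := by
    rw [appL_apply, hc₀, Fin.sum_univ_succ] at hδ1
    simpa [Fin.succ_ne_zero] using hδ1
  rw [DlogZ, mem_Dlog]
  intro i
  by_cases hi : i = i₀
  · simp [hi]
  · rw [if_neg hi]
    set S : Finset η :=
      Finset.univ.filter (fun i' => i' ≠ i₀ ∧ ∃ t : K, cbar c i' = t • cbar c i) with hS
    have hzm : zmult c i₀ i = S.card := by rw [zmult, hS]
    set g : MvPolynomial (Fin (ℓ + 1)) K := appL (c i) δ with hg
    have hgsum : g = ∑ j : Fin ℓ, C (c i j.succ) * δ j.succ := by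
      rw [hg, appL_apply, Fin.sum_univ_succ, hδ0, mul_zero, zero_add]
    -- for each member of S, choose the proportionality factor
    have hS' : ∀ i', ∃ t : K, i' ∈ S → (t ≠ 0 ∧ cbar c i' = t • cbar c i) := by
      intro i'
      by_cases h : i' ∈ S
      · rw [hS, Finset.mem_filter] at h
        obtain ⟨-, hni, t, ht⟩ := h
        refine ⟨t, fun _ => ⟨?_, ht⟩⟩
        intro h0
        subst h0
        refine hdist i' i₀ hni (c i' 0) ?_
        funext j
        rw [hc₀]
        simp only [Pi.smul_apply, smul_eq_mul]
        cases j using Fin.cases with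
        | zero => simp
        | succ j =>
          have := congrFun ht j
          simp only [Pi.smul_apply, smul_eq_mul, zero_mul] at this
          simpa [Fin.succ_ne_zero, cbar] using this
      · exact ⟨0, fun hc => absurd hc h⟩
    choose tf htf using hS'
    have key : ∀ i' ∈ S, linForm (c i') ∣ g := by
      intro i' hmem
      obtain ⟨ht0, ht⟩ := htf i' hmem
      have htfj : ∀ j : Fin ℓ, c i' j.succ = tf i' * c i j.succ := by
        intro j
        have := congrFun ht j
        simpa [cbar] using this
      have hd1 := hδ i'
      rw [pow_one] at hd1
      have happ' : appL (c i') δ = C (tf i') * g := by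
        rw [appL_apply, Fin.sum_univ_succ, hδ0, mul_zero, zero_add, hgsum, Finset.mul_sum]
        refine Finset.sum_congr rfl fun j _ => ?_
        rw [htfj j, C_mul]
        ring
      rw [happ'] at hd1
      have hgu : g = C (tf i')⁻¹ * (C (tf i') * g) := by
        rw [← mul_assoc, ← C_mul, inv_mul_cancel₀ ht0, C_1, one_mul]
      rw [hgu]
      exact hd1.mul_left _
    have hp : ∀ i' ∈ S, Prime (linForm (c i')) := fun i' _ => prime_linForm _ (hne i')
    have hnd : ∀ i' ∈ S, ∀ i'' ∈ S, i' ≠ i'' → ¬ linForm (c i') ∣ linForm (c i'') := by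
      intro i' _ i'' _ hne' hdvd
      obtain ⟨j₀, hj₀⟩ : ∃ j, c i' j ≠ 0 := by
        by_contra hcon; push_neg at hcon; exact hne i' (funext hcon)
      have hker : ∀ x : Fin (ℓ + 1) → K,
          (∑ j, c i' j * x j) = 0 → (∑ j, c i'' j * x j) = 0 := by
        intro x hx
        obtain ⟨q, hq⟩ := hdvd
        have h2 : eval x (linForm (c i'')) = eval x (linForm (c i')) * eval x q := by
          rw [hq, map_mul]
        rw [eval_linForm, eval_linForm, hx, zero_mul] at h2
        exact h2
      obtain ⟨t, ht⟩ := hyperplane_incl (c i') (c i'') j₀ hj₀ hker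
      exact hdist i'' i' hne'.symm t ht
    have hprod := prod_primes_dvd' S (fun i' => linForm (c i')) g hp key hnd
    have hmap := map_dvd restPoly hprod
    have hrest : restPoly g = appL (cbar c i) (restDer δ) := by
      rw [hgsum, map_sum, appL_apply]
      refine Finset.sum_congr rfl fun j _ => ?_
      rw [map_mul]
      congr 1
      simp [restPoly, algebraMap_eq, cbar]
    have hfac : restPoly (∏ i' ∈ S, linForm (c i'))
        = C (∏ i' ∈ S, tf i') * linForm (cbar c i) ^ S.card := by
      rw [map_prod]
      have hterm : ∀ i' ∈ S, restPoly (linForm (c i'))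
          = C (tf i') * linForm (cbar c i) := by
        intro i' hmem
        rw [restPoly_linForm]
        have : (fun j : Fin ℓ => c i' j.succ) = cbar c i' := rfl
        rw [this, (htf i' hmem).2, linForm_smul]
      rw [Finset.prod_congr rfl hterm, Finset.prod_mul_distrib, Finset.prod_const, map_prod]
    rw [hfac, hrest] at hmap
    rw [hzm]
    exact dvd_trans (Dvd.intro_left _ rfl) hmap
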